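/- arXiv:1604.07774 — 5 statements merged into one kernel-verified Lean document; each statement's English description precedes it below -/
import Mathlib

section
/- For every prime p not dividing 11, the number of points (including the point at infinity) on the elliptic curve y² + y = x³ - x² - 10x - 20 over the field with p elements is divisible by 5. -/
/-!
The point `P = (5, 5)` is a rational `5`-torsion point of `E`: doubling gives `2P = (16, -61)`
and `4P = (5, -6) = -P`. Doubling only divides by `11` and `121`, so the same computation holds
over every field in which `11 ≠ 0`, where `E` is moreover an elliptic curve. There `P` is a point
of order `5` of the finite group `E(𝔽_p)`, and Lagrange's theorem gives `5 ∣ |E(𝔽_p)|`.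
-/

open WeierstrassCurve WeierstrassCurve.Affine

namespace WeierstrassCurve.Affine.Point

variable {F : Type*} [Field F] [DecidableEq F] {W : Affine F}

lemma add_self_some_eq {x y x' y' : F} {h : W.Nonsingular x y} (h' : W.Nonsingular x' y')
    (hy : y ≠ W.negY x y) (hx' : W.addX x x (W.slope x x y y) = x')
    (hy' : W.addY x x y (W.slope x x y y) = y') :
    some x y h + some x y h = some x' y' h' := by
  subst hx' hy'
  exact add_self_of_Y_ne hy

end WeierstrassCurve.Affine.Point

def curve11a1 (R : Type*) [CommRing R] : Affine R :=
  { a₁ := 0, a₂ := -1, a₃ := 1, a₄ := -10, a₆ := -20 }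

section CommRing

variable {R : Type*} [CommRing R]

lemma curve11a1_Δ : (curve11a1 R).Δ = -11 ^ 5 := by
  simp only [curve11a1, Δ, b₂, b₄, b₆, b₈]
  ring

lemma curve11a1_equation_iff (x y : R) :
    (curve11a1 R).Equation x y ↔ y ^ 2 + y = x ^ 3 - x ^ 2 - 10 * x - 20 := by
  rw [equation_iff]
  simp only [curve11a1]
  constructor <;> intro h <;> linear_combination h

lemma curve11a1_negY (x y : R) : (curve11a1 R).negY x y = -y - 1 := by
  simp only [negY, curve11a1]
  ring

end CommRing

namespace Curve11a1

variable {F : Type*} [Field F] (h11 : (11 : F) ≠ 0)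
include h11

lemma isElliptic : (curve11a1 F).IsElliptic :=
  (isElliptic_iff _).mpr <| by
    rw [curve11a1_Δ]
    exact (pow_ne_zero 5 h11).isUnit.neg

lemma nonsingular_of_equation {x y : F} (h : (curve11a1 F).Equation x y) :
    (curve11a1 F).Nonsingular x y :=
  have := isElliptic h11
  equation_iff_nonsingular.mp h

lemma nonsingular_five_five : (curve11a1 F).Nonsingular 5 5 :=
  nonsingular_of_equation h11 <| (curve11a1_equation_iff _ _).mpr <| by ring

lemma nonsingular_sixteen_neg_sixtyOne : (curve11a1 F).Nonsingular 16 (-61) :=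
  nonsingular_of_equation h11 <| (curve11a1_equation_iff _ _).mpr <| by ring

noncomputable def torsionPoint : (curve11a1 F).Point :=
  .some 5 5 (nonsingular_five_five h11)

section Doubling

variable [DecidableEq F]

lemma two_nsmul_torsionPoint :
    2 • torsionPoint h11 = .some 16 (-61) (nonsingular_sixteen_neg_sixtyOne h11) := by
  have hy : (5 : F) ≠ (curve11a1 F).negY 5 5 := by
    rw [curve11a1_negY]
    exact fun h ↦ h11 (by linear_combination h)
  have hslope : (curve11a1 F).slope 5 5 5 5 = 5 := by
    rw [slope_of_Y_ne rfl hy, curve11a1_negY, div_eq_iff (by rwa [← curve11a1_negY, sub_ne_zero])]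
    simp only [curve11a1]
    ring
  rw [two_nsmul, torsionPoint]
  refine Point.add_self_some_eq _ hy ?_ ?_ <;>
    simp only [addX, addY, negAddY, hslope, curve11a1_negY] <;> simp only [curve11a1] <;> ring

lemma four_nsmul_torsionPoint : 4 • torsionPoint h11 = -torsionPoint h11 := by
  have h121 : (121 : F) ≠ 0 := by
    rw [show (121 : F) = 11 * 11 by norm_num]
    exact mul_ne_zero h11 h11
  have hy : (-61 : F) ≠ (curve11a1 F).negY 16 (-61) := by
    rw [curve11a1_negY]
    exact fun h ↦ h121 (by linear_combination -h)
  have hslope : (curve11a1 F).slope 16 16 (-61) (-61) = -6 := by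
    rw [slope_of_Y_ne rfl hy, curve11a1_negY, div_eq_iff (by rwa [← curve11a1_negY, sub_ne_zero])]
    simp only [curve11a1]
    ring
  rw [show 4 = 2 * 2 from rfl, mul_nsmul, two_nsmul_torsionPoint, two_nsmul, torsionPoint,
    Point.neg_some]
  refine Point.add_self_some_eq _ hy ?_ ?_ <;>
    simp only [addX, addY, negAddY, hslope, curve11a1_negY] <;> simp only [curve11a1] <;> ring

lemma addOrderOf_torsionPoint : addOrderOf (torsionPoint h11) = 5 := by
  have : Fact (Nat.Prime 5) := ⟨Nat.prime_five⟩
  refine addOrderOf_eq_prime ?_ (Point.some_ne_zero _)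
  rw [succ_nsmul, four_nsmul_torsionPoint, neg_add_cancel]

end Doubling

lemma five_dvd_card_point : 5 ∣ Nat.card (curve11a1 F).Point := by
  classical
  exact addOrderOf_torsionPoint h11 ▸ addOrderOf_dvd_natCard _

lemma five_dvd_card_affine_add_one [Finite F] :
    5 ∣ Nat.card {P : F × F // P.2 ^ 2 + P.2 = P.1 ^ 3 - P.1 ^ 2 - 10 * P.1 - 20} + 1 := by
  have := isElliptic h11
  have hcard := Nat.card_congr (pointEquiv (curve11a1 F))
  rw [WithZero, Finite.card_option] at hcard
  rw [Nat.card_congr <| Equiv.subtypeEquivRight fun P : F × F ↦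
    (curve11a1_equation_iff P.1 P.2).symm, ← hcard]
  exact five_dvd_card_point h11

end Curve11a1

theorem stmt_0 (p : ℕ) (hp : p.Prime) (h : ¬ (p ∣ 11)) :
    5 ∣ Nat.card {P : ZMod p × ZMod p //
      P.2 ^ 2 + P.2 = P.1 ^ 3 - P.1 ^ 2 - 10 * P.1 - 20} + 1 := by
  have : Fact p.Prime := ⟨hp⟩
  have h11 : (11 : ZMod p) ≠ 0 := by
    exact_mod_cast (ZMod.natCast_eq_zero_iff 11 p).not.mpr h
  exact Curve11a1.five_dvd_card_affine_add_one h11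
end

section
/- For every prime p not dividing 14, the number of points (including the point at infinity) on the elliptic curve y² + xy + y = x³ + 4x - 6 over the field with p elements is divisible by 6. -/
/-!
Over `𝔽_p` the curve has the points `(1, -1)`, where the tangent is vertical, and `(2, 2)`, a flex
point (its tangent meets the curve only there). For `p ∤ 14` the discriminant `-2⁶ · 7³` is
nonzero, so every affine solution is a point of the group `E(𝔽_p)`, and these two points have
exact orders 2 and 3. Lagrange's theorem then gives `6 ∣ |E(𝔽_p)|`.
-/

open WeierstrassCurve WeierstrassCurve.Affine

lemma six_dvd_natCard_of_two_nsmul_of_three_nsmul {G : Type*} [AddGroup G] {a b : G}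
    (ha : 2 • a = 0) (ha₀ : a ≠ 0) (hb : 3 • b = 0) (hb₀ : b ≠ 0) : 6 ∣ Nat.card G := by
  have h₂ : 2 ∣ Nat.card G := addOrderOf_eq_prime ha ha₀ ▸ addOrderOf_dvd_natCard a
  have h₃ : 3 ∣ Nat.card G := addOrderOf_eq_prime hb hb₀ ▸ addOrderOf_dvd_natCard b
  exact Nat.Coprime.mul_dvd_of_dvd_of_dvd (by norm_num) h₂ h₃

namespace WeierstrassCurve.Affine

variable {F : Type*} [Field F]

def pointEquivOptionEquation {W : Affine F} (hΔ : W.Δ ≠ 0) :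
    W.Point ≃ Option {P : F × F // W.Equation P.1 P.2} where
  toFun
    | .zero => none
    | .some x y h => Option.some ⟨(x, y), h.1⟩
  invFun
    | none => .zero
    | Option.some ⟨(x, y), h⟩ => .some x y ((equation_iff_nonsingular_of_Δ_ne_zero hΔ).mp h)
  left_inv := by rintro (_ | _) <;> rfl
  right_inv := by rintro (_ | ⟨⟨x, y⟩, h⟩) <;> rfl

lemma natCard_point_eq [Finite F] {W : Affine F} (hΔ : W.Δ ≠ 0) :
    Nat.card W.Point = Nat.card {P : F × F // W.Equation P.1 P.2} + 1 := by
  rw [Nat.card_congr (pointEquivOptionEquation hΔ), Finite.card_option]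

end WeierstrassCurve.Affine

def curve14a1 (R : Type*) [CommRing R] : Affine R := ⟨1, 0, 1, 4, -6⟩

section curve14a1

lemma curve14a1_equation_iff {R : Type*} [CommRing R] (x y : R) :
    (curve14a1 R).Equation x y ↔ y ^ 2 + x * y + y = x ^ 3 + 4 * x - 6 := by
  rw [equation_iff]
  simp only [curve14a1]
  constructor <;> intro h <;> linear_combination h

lemma curve14a1_Δ (R : Type*) [CommRing R] : (curve14a1 R).Δ = -(2 ^ 6 * 7 ^ 3) := by
  simp only [Δ, b₂, b₄, b₆, b₈, curve14a1]
  ring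

variable {F : Type*} [Field F]

lemma curve14a1_Δ_ne_zero (h₂ : (2 : F) ≠ 0) (h₇ : (7 : F) ≠ 0) : (curve14a1 F).Δ ≠ 0 := by
  rw [curve14a1_Δ]
  exact neg_ne_zero.mpr (mul_ne_zero (pow_ne_zero _ h₂) (pow_ne_zero _ h₇))

lemma curve14a1_nonsingular_one_neg_one (h₂ : (2 : F) ≠ 0) :
    (curve14a1 F).Nonsingular 1 (-1) := by
  refine (nonsingular_iff _ _).mpr ⟨(curve14a1_equation_iff _ _).mpr (by ring), Or.inl ?_⟩
  simp only [curve14a1]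
  intro h
  exact pow_ne_zero 3 h₂ (by linear_combination -h)

lemma curve14a1_nonsingular_two_two (h₇ : (7 : F) ≠ 0) : (curve14a1 F).Nonsingular 2 2 := by
  refine (nonsingular_iff _ _).mpr ⟨(curve14a1_equation_iff _ _).mpr (by ring), Or.inr ?_⟩
  simp only [curve14a1]
  intro h
  exact h₇ (by linear_combination h)

variable [DecidableEq F]

lemma curve14a1_two_nsmul_some_one_neg_one (h₂ : (2 : F) ≠ 0) :
    2 • Point.some _ _ (curve14a1_nonsingular_one_neg_one h₂) = 0 := by
  rw [two_nsmul]
  exact Point.add_self_of_Y_eq (by simp only [negY, curve14a1]; ring)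

lemma curve14a1_three_nsmul_some_two_two (h₇ : (7 : F) ≠ 0) :
    3 • Point.some _ _ (curve14a1_nonsingular_two_two h₇) = 0 := by
  have hy : (2 : F) ≠ (curve14a1 F).negY 2 2 := by
    simp only [negY, curve14a1]
    intro h
    exact h₇ (by linear_combination h)
  have hslope : (curve14a1 F).slope 2 2 2 2 = 2 := by
    rw [slope_of_Y_ne rfl hy, div_eq_iff (sub_ne_zero.mpr hy)]
    simp only [negY, curve14a1]
    ring
  have hdouble : Point.some _ _ (curve14a1_nonsingular_two_two h₇) +
      Point.some _ _ (curve14a1_nonsingular_two_two h₇) =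
      -Point.some _ _ (curve14a1_nonsingular_two_two h₇) := by
    rw [Point.add_self_of_Y_ne' hy, neg_inj, Point.some.injEq, hslope]
    constructor <;> simp only [addX, negAddY, curve14a1] <;> ring
  rw [show (3 : ℕ) = 2 + 1 from rfl, succ_nsmul, two_nsmul, hdouble, neg_add_cancel]

end curve14a1

theorem stmt_1 (p : ℕ) (hp : p.Prime) (h : ¬ (p ∣ 14)) :
    6 ∣ Nat.card {P : ZMod p × ZMod p //
      P.2 ^ 2 + P.1 * P.2 + P.2 = P.1 ^ 3 + 4 * P.1 - 6} + 1 := by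
  have : Fact p.Prime := ⟨hp⟩
  have h₂ : (2 : ZMod p) ≠ 0 := by
    rw [← Nat.cast_ofNat, Ne, ZMod.natCast_eq_zero_iff]
    exact fun hdvd ↦ h (hdvd.trans ⟨7, rfl⟩)
  have h₇ : (7 : ZMod p) ≠ 0 := by
    rw [← Nat.cast_ofNat, Ne, ZMod.natCast_eq_zero_iff]
    exact fun hdvd ↦ h (hdvd.trans ⟨2, rfl⟩)
  have hcard := natCard_point_eq (curve14a1_Δ_ne_zero h₂ h₇)
  simp only [curve14a1_equation_iff] at hcard
  rw [← hcard]
  exact six_dvd_natCard_of_two_nsmul_of_three_nsmul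
    (curve14a1_two_nsmul_some_one_neg_one h₂) (Point.some_ne_zero _)
    (curve14a1_three_nsmul_some_two_two h₇) (Point.some_ne_zero _)
end

section
/- For every prime p not dividing 15, the number of points (including the point at infinity) on the elliptic curve y² + xy + y = x³ + x² - 10x - 10 over the field with p elements is divisible by 4. -/
/-!
The points (-1, 0) and (3, -2) satisfy y = -y - x - 1, so they are points of order 2 on E. For odd
p of good reduction they stay distinct (their x-coordinates differ by 4), so E(𝔽_p) contains a copy
of (ℤ/2)², and Lagrange gives 4 ∣ |E(𝔽_p)|. For p = 2 the two points coincide and the count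
|E(𝔽₂)| = 4 is checked directly.
-/

open WeierstrassCurve WeierstrassCurve.Affine

section TwoTorsion

variable {G : Type*} [AddCommGroup G]

def zmodTwoHom (a : G) (ha : 2 • a = 0) : ZMod 2 →+ G :=
  ZMod.lift 2 ⟨zmultiplesHom G a, by simpa [two_zsmul, two_nsmul] using ha⟩

@[simp]
lemma zmodTwoHom_one (a : G) (ha : 2 • a = 0) : zmodTwoHom a ha 1 = a := by
  unfold zmodTwoHom
  simpa using ZMod.lift_coe 2 ⟨zmultiplesHom G a, _⟩ 1

lemma four_dvd_natCard_of_two_torsion {a b : G} (ha : 2 • a = 0) (hb : 2 • b = 0)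
    (ha₀ : a ≠ 0) (hb₀ : b ≠ 0) (hab : a ≠ b) : 4 ∣ Nat.card G := by
  have hab₀ : a + b ≠ 0 := fun h => hab <|
    calc a = (a + a) - (a + b) + b := by abel
      _ = b := by rw [← two_nsmul, ha, h, sub_zero, zero_add]
  have zmod_two_cases : ∀ i : ZMod 2, i = 0 ∨ i = 1 := by decide
  let f := (zmodTwoHom a ha).coprod (zmodTwoHom b hb)
  have hf : Function.Injective f := by
    rw [injective_iff_map_eq_zero]
    rintro ⟨i, j⟩
    rcases zmod_two_cases i with rfl | rfl <;> rcases zmod_two_cases j with rfl | rfl <;>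
      simp [f, ha₀, hb₀, hab₀]
  simpa using AddSubgroup.card_dvd_of_injective f hf

end TwoTorsion

namespace WeierstrassCurve.Affine

variable {F : Type*} [Field F]

def pointEquivOption (W : Affine F) :
    W.Point ≃ Option {P : F × F // W.Nonsingular P.1 P.2} where
  toFun
    | .zero => none
    | .some x y h => some ⟨(x, y), h⟩
  invFun
    | none => 0
    | some ⟨(x, y), h⟩ => .some x y h
  left_inv := by rintro (_ | _) <;> rfl
  right_inv := by rintro (_ | ⟨⟨x, y⟩, h⟩) <;> rfl

lemma natCard_point [Finite F] (W : Affine F) :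
    Nat.card W.Point = Nat.card {P : F × F // W.Nonsingular P.1 P.2} + 1 := by
  rw [Nat.card_congr W.pointEquivOption, Finite.card_option]

end WeierstrassCurve.Affine

def E15a1 (F : Type*) [Field F] : WeierstrassCurve.Affine F :=
  { a₁ := 1, a₂ := 1, a₃ := 1, a₄ := -10, a₆ := -10 }

namespace E15a1

variable {F : Type*} [Field F]

lemma Δ_eq : (E15a1 F).Δ = 15 ^ 4 := by
  simp only [E15a1, Δ, b₂, b₄, b₆, b₈]
  norm_num

lemma equation_iff {x y : F} :
    (E15a1 F).Equation x y ↔ y ^ 2 + x * y + y = x ^ 3 + x ^ 2 - 10 * x - 10 := by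
  rw [Affine.equation_iff]
  simp only [E15a1]
  constructor <;> intro h <;> linear_combination h

lemma nonsingular_iff (h15 : (15 : F) ≠ 0) {x y : F} :
    (E15a1 F).Nonsingular x y ↔ y ^ 2 + x * y + y = x ^ 3 + x ^ 2 - 10 * x - 10 := by
  rw [← equation_iff_nonsingular_of_Δ_ne_zero (by rw [Δ_eq]; exact pow_ne_zero 4 h15),
    equation_iff]

lemma natCard_point [Finite F] (h15 : (15 : F) ≠ 0) :
    Nat.card (E15a1 F).Point = Nat.card {P : F × F //
      P.2 ^ 2 + P.1 * P.2 + P.2 = P.1 ^ 3 + P.1 ^ 2 - 10 * P.1 - 10} + 1 := by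
  rw [Affine.natCard_point, Nat.card_congr (Equiv.subtypeEquivRight fun _ => nonsingular_iff h15)]

variable [DecidableEq F]

lemma two_nsmul_some {x y : F} (h : (E15a1 F).Nonsingular x y) (hy : 2 * y + x + 1 = 0) :
    2 • Point.some x y h = 0 := by
  rw [two_nsmul]
  exact Point.add_self_of_Y_eq (by simp only [E15a1, negY]; linear_combination hy)

lemma four_dvd_natCard_point (h2 : (2 : F) ≠ 0) (h15 : (15 : F) ≠ 0) :
    4 ∣ Nat.card (E15a1 F).Point := by
  have h₁ : (E15a1 F).Nonsingular (-1) 0 := (nonsingular_iff h15).mpr (by ring)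
  have h₂ : (E15a1 F).Nonsingular 3 (-2) := (nonsingular_iff h15).mpr (by ring)
  refine four_dvd_natCard_of_two_torsion (two_nsmul_some h₁ (by ring))
    (two_nsmul_some h₂ (by ring)) (Point.some_ne_zero h₁) (Point.some_ne_zero h₂) fun h => ?_
  have : (-1 : F) = 3 := (Point.some.inj h).1
  exact mul_ne_zero h2 h2 (by linear_combination -this)

end E15a1

theorem stmt_2 (p : ℕ) (hp : p.Prime) (h : ¬ (p ∣ 15)) :
    4 ∣ Nat.card {P : ZMod p × ZMod p //
      P.2 ^ 2 + P.1 * P.2 + P.2 = P.1 ^ 3 + P.1 ^ 2 - 10 * P.1 - 10} + 1 := by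
  rcases eq_or_ne p 2 with rfl | hp2
  · rw [Nat.card_eq_fintype_card]; decide
  have := Fact.mk hp
  have h2 : (2 : ZMod p) ≠ 0 := fun h0 =>
    hp2 <| (Nat.prime_dvd_prime_iff_eq hp Nat.prime_two).mp <|
      (ZMod.natCast_eq_zero_iff 2 p).mp (mod_cast h0)
  have h15 : (15 : ZMod p) ≠ 0 := fun h0 => h <| (ZMod.natCast_eq_zero_iff 15 p).mp (mod_cast h0)
  rw [← E15a1.natCard_point h15]
  exact E15a1.four_dvd_natCard_point h2 h15
end

section
/- For every prime p not dividing 30, the number of points (including the point at infinity) on the elliptic curve y² + xy + y = x³ + x + 2 over the field with p elements is divisible by 6. -/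
/-!
The curve has the rational torsion points `(-1, 0)` of order 2 and `(0, 1)` of order 3, and its
discriminant `-2160 = -2⁴·3³·5` is a unit modulo every prime `p ∤ 30`. So the reduction modulo
such a `p` is an elliptic curve whose group `E(𝔽_p)` contains points of orders 2 and 3,
and its order is divisible by 6 by Lagrange's theorem.
-/

open WeierstrassCurve WeierstrassCurve.Affine

def curve30A (R : Type*) [CommRing R] : WeierstrassCurve R :=
  { a₁ := 1, a₂ := 0, a₃ := 1, a₄ := 1, a₆ := 2 }

section CommRing

variable {R : Type*} [CommRing R]

lemma curve30A_Δ : (curve30A R).Δ = -2160 := by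
  norm_num [curve30A, Δ, b₂, b₄, b₆, b₈]

lemma curve30A_equation_iff (x y : R) :
    (curve30A R).toAffine.Equation x y ↔ y ^ 2 + x * y + y = x ^ 3 + x + 2 := by
  simp [equation_iff, curve30A]

-- `2160 * 375 = 30 ^ 4`
lemma curve30A_isElliptic (h30 : IsUnit (30 : R)) : (curve30A R).IsElliptic := by
  refine ⟨?_⟩
  rw [curve30A_Δ, IsUnit.neg_iff]
  exact isUnit_of_dvd_unit ⟨375, by norm_num⟩ (h30.pow 4)

lemma isUnit_three_of_curve30A_isElliptic [(curve30A R).IsElliptic] : IsUnit (3 : R) := by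
  have hΔ := (curve30A R).isUnit_Δ
  rw [curve30A_Δ, IsUnit.neg_iff] at hΔ
  exact isUnit_of_dvd_unit ⟨720, by norm_num⟩ hΔ

lemma natCard_curve30A_point [Nontrivial R] [Finite R] [(curve30A R).IsElliptic] :
    Nat.card (curve30A R).toAffine.Point =
      Nat.card {P : R × R // P.2 ^ 2 + P.1 * P.2 + P.2 = P.1 ^ 3 + P.1 + 2} + 1 := by
  rw [Nat.card_congr (pointEquiv (curve30A R).toAffine), WithZero, Finite.card_option,
    Nat.card_congr (Equiv.subtypeEquivRight fun P : R × R ↦ curve30A_equation_iff P.1 P.2)]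

end CommRing

section Field

variable {F : Type*} [Field F] [DecidableEq F] [(curve30A F).IsElliptic]

noncomputable def curve30A.torsionTwo : (curve30A F).toAffine.Point :=
  .mk ((curve30A_equation_iff (-1 : F) 0).mpr (by ring))

noncomputable def curve30A.torsionThree : (curve30A F).toAffine.Point :=
  .mk ((curve30A_equation_iff (0 : F) 1).mpr (by ring))

lemma curve30A.addOrderOf_torsionTwo : addOrderOf (torsionTwo : (curve30A F).toAffine.Point) = 2 :=
  addOrderOf_eq_prime (by rw [two_nsmul]; exact Point.add_self_of_Y_eq (by simp [curve30A]))
    (Point.some_ne_zero _)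

-- `(0, 1)` is a flex: its tangent `y = 1` meets the curve in `x³ = 0`.
lemma curve30A.two_nsmul_torsionThree :
    2 • (torsionThree : (curve30A F).toAffine.Point) = -torsionThree := by
  have h3 : (3 : F) ≠ 0 := isUnit_three_of_curve30A_isElliptic.ne_zero
  have hy : (1 : F) ≠ (curve30A F).toAffine.negY 0 1 := by
    simp only [curve30A, negY]
    intro hc
    exact h3 (by linear_combination hc)
  have hslope : (curve30A F).toAffine.slope 0 0 1 1 = 0 := by
    rw [slope_of_Y_ne rfl hy]
    norm_num [curve30A]
  rw [two_nsmul, torsionThree, Point.mk, Point.add_self_of_Y_ne hy, Point.neg_some]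
  simp only [Point.some.injEq, hslope]
  norm_num [curve30A, addX, addY, negAddY, negY]

lemma curve30A.addOrderOf_torsionThree :
    addOrderOf (torsionThree : (curve30A F).toAffine.Point) = 3 :=
  addOrderOf_eq_prime (by rw [succ_nsmul, two_nsmul_torsionThree, neg_add_cancel])
    (Point.some_ne_zero _)

end Field

theorem stmt_3 (p : ℕ) (hp : p.Prime) (h : ¬ (p ∣ 30)) :
    6 ∣ Nat.card {P : ZMod p × ZMod p //
      P.2 ^ 2 + P.1 * P.2 + P.2 = P.1 ^ 3 + P.1 + 2} + 1 := by
  have : Fact p.Prime := ⟨hp⟩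
  have h30 : IsUnit (30 : ZMod p) := by
    exact_mod_cast (ZMod.isUnit_iff_coprime 30 p).mpr ((hp.coprime_iff_not_dvd.mpr h).symm)
  have := curve30A_isElliptic h30
  rw [← natCard_curve30A_point (R := ZMod p), show 6 = 2 * 3 from rfl]
  exact Nat.Coprime.mul_dvd_of_dvd_of_dvd (by norm_num)
    (curve30A.addOrderOf_torsionTwo (F := ZMod p) ▸ addOrderOf_dvd_natCard _)
    (curve30A.addOrderOf_torsionThree (F := ZMod p) ▸ addOrderOf_dvd_natCard _)
end

section
/- For every prime p not dividing 38, the number of points (including the point at infinity) on the elliptic curve y² + xy + y = x³ + 9x + 90 over the field with p elements is divisible by 3. -/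
/-!
The point `(0, 9)` lies on `E`, and its tangent `y = 9` meets the cubic only there (a flex), so
it is a point of order `3` on the reduction of `E` at every prime of good reduction. By Lagrange,
`3` divides `|E(𝔽_p)|`.
-/

open WeierstrassCurve WeierstrassCurve.Affine

namespace WeierstrassCurve.Affine

variable {F : Type*} [Field F] {W : WeierstrassCurve.Affine F}

lemma natCard_point_eq_natCard_equation_add_one [Finite F] (hΔ : W.Δ ≠ 0) :
    Nat.card W.Point = Nat.card {xy : F × F // W.Equation xy.1 xy.2} + 1 := by
  rw [Nat.card_congr W.nonsingularPointEquiv, WithZero, Finite.card_option]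
  congr 1
  exact Nat.card_congr <| Equiv.subtypeEquivRight fun _ =>
    (equation_iff_nonsingular_of_Δ_ne_zero hΔ).symm

/-- `hx` says that the tangent at `(x, y)` meets the curve a third time at `(x, y)` itself,
so that `2P = -P`. -/
lemma Point.three_nsmul_some_eq_zero [DecidableEq F] {x y : F} (h : W.Nonsingular x y)
    (hy : y ≠ W.negY x y) (hx : W.addX x x (W.slope x x y y) = x) :
    3 • Point.some x y h = 0 := by
  have hdouble : Point.some x y h + Point.some x y h = -Point.some x y h := by
    rw [Point.add_self_of_Y_ne hy, Point.neg_some]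
    congr 1
    simp only [addY, negAddY, hx, sub_self, mul_zero, zero_add]
  rw [succ_nsmul, two_nsmul, hdouble, neg_add_cancel]

end WeierstrassCurve.Affine

def curve38A : WeierstrassCurve ℤ := { a₁ := 1, a₂ := 0, a₃ := 1, a₄ := 9, a₆ := 90 }

lemma curve38A_Δ : curve38A.Δ = -(2 ^ 6 * 38 ^ 3) := by decide

namespace curve38A

variable {F : Type*} [Field F]

lemma baseChange_eq : curve38A⁄F = { a₁ := 1, a₂ := 0, a₃ := 1, a₄ := 9, a₆ := 90 } := by
  ext <;> simp [curve38A, WeierstrassCurve.baseChange]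

lemma baseChange_equation_iff {x y : F} : (curve38A⁄F).toAffine.Equation x y ↔
    y ^ 2 + x * y + y = x ^ 3 + 9 * x + 90 := by
  simp [baseChange_eq, equation_iff]

lemma baseChange_Δ_ne_zero (h38 : (38 : F) ≠ 0) : (curve38A⁄F).Δ ≠ 0 := by
  have h2 : (2 : F) ≠ 0 := left_ne_zero_of_mul (a := (2 : F)) (b := 19) (by norm_num [h38])
  show (curve38A.map (algebraMap ℤ F)).Δ ≠ 0
  rw [map_Δ, curve38A_Δ]
  simp only [map_neg, map_mul, map_pow, map_ofNat]
  exact neg_ne_zero.mpr (mul_ne_zero (pow_ne_zero _ h2) (pow_ne_zero _ h38))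

lemma baseChange_nonsingular_zero_nine (h38 : (38 : F) ≠ 0) :
    (curve38A⁄F).toAffine.Nonsingular 0 9 :=
  (equation_iff_nonsingular_of_Δ_ne_zero (baseChange_Δ_ne_zero h38)).mp <|
    baseChange_equation_iff.mpr (by norm_num)

lemma three_nsmul_some_zero_nine [DecidableEq F] (h38 : (38 : F) ≠ 0) :
    3 • Point.some 0 9 (baseChange_nonsingular_zero_nine h38) = 0 := by
  have h19 : (19 : F) ≠ 0 := right_ne_zero_of_mul (a := (2 : F)) (b := 19) (by norm_num [h38])
  have hy : (9 : F) ≠ (curve38A⁄F).toAffine.negY 0 9 := by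
    rw [baseChange_eq]
    simp only [negY]
    intro h9
    exact h19 (by linear_combination h9)
  have hslope : (curve38A⁄F).toAffine.slope 0 0 9 9 = 0 := by
    rw [slope_of_Y_ne rfl hy, baseChange_eq]
    simp
  refine Point.three_nsmul_some_eq_zero _ hy ?_
  rw [hslope, baseChange_eq]
  simp

lemma three_dvd_natCard_baseChange_point [DecidableEq F] (h38 : (38 : F) ≠ 0) :
    3 ∣ Nat.card (curve38A⁄F).toAffine.Point :=
  addOrderOf_eq_prime (three_nsmul_some_zero_nine h38) (Point.some_ne_zero _) ▸
    addOrderOf_dvd_natCard _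

end curve38A

theorem stmt_5 (p : ℕ) (hp : p.Prime) (h : ¬ (p ∣ 38)) :
    3 ∣ Nat.card {P : ZMod p × ZMod p //
      P.2 ^ 2 + P.1 * P.2 + P.2 = P.1 ^ 3 + 9 * P.1 + 90} + 1 := by
  have : Fact p.Prime := ⟨hp⟩
  have h38 : (38 : ZMod p) ≠ 0 := by
    exact_mod_cast (ZMod.natCast_eq_zero_iff 38 p).not.mpr h
  rw [← Nat.card_congr (Equiv.subtypeEquivRight fun _ => curve38A.baseChange_equation_iff),
    ← natCard_point_eq_natCard_equation_add_one (curve38A.baseChange_Δ_ne_zero h38)]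
  exact curve38A.three_dvd_natCard_baseChange_point h38
end
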